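/- arXiv:2604.04709 — 2 statements merged into one kernel-verified Lean document; each statement's English description precedes it below -/
import Mathlib

section
/- Let e = (e_1,...,e_5) be integers with 1 ≤ e_1 ≤ e_2 ≤ e_3 ≤ e_4 ≤ e_5, satisfying e_5 ≤ e_1 + e_4, e_5 ≤ e_2 + e_3, e_3 ≤ e_1 + e_2, e_4 ≤ 2e_2 (i.e., e ∈ P_2), and suppose additionally e_5 ≤ e_1 + e_2. If e ∉ P_3 (i.e., e_2 > 2e_1 or e_4 > e_1 + e_3), then the partition {2,3} ⊔ {4,5} of {2,3,4,5} is admissible for e, meaning: e_2 + e_3 ≤ e_4 + e_5, e_2 ≤ e_3 ≤ e_2 + e_1, e_4 ≤ e_5 ≤ e_4 + e_1, and e_4 + e_5 + e_1 ≤ 2e_2 + 2e_3. -/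
/-- Lemma 2.5 of the paper: if `e ∈ P₂ \ P₃` and `e₅ ≤ e₁ + e₂`, the partition
`{2,3} ⊔ {4,5}` of `{2,3,4,5}` is admissible for `e`. -/
theorem stmt0 (e1 e2 e3 e4 e5 : ℤ)
    (he1 : 1 ≤ e1) (h12 : e1 ≤ e2) (h23 : e2 ≤ e3) (h34 : e3 ≤ e4) (h45 : e4 ≤ e5)
    (hP2a : e5 ≤ e1 + e4) (hP2b : e5 ≤ e2 + e3) (hP2c : e3 ≤ e1 + e2)
    (hP2d : e4 ≤ 2 * e2)
    (h512 : e5 ≤ e1 + e2)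
    (hnP3 : 2 * e1 < e2 ∨ e1 + e3 < e4) :
    e2 + e3 ≤ e4 + e5 ∧ (e2 ≤ e3 ∧ e3 ≤ e2 + e1) ∧ (e4 ≤ e5 ∧ e5 ≤ e4 + e1) ∧
      e4 + e5 + e1 ≤ 2 * e2 + 2 * e3 := by
  omega
end

section
/- Let e = (e_1,...,e_5) ∈ P_2 \ P_3 and suppose integers f_1 ≤ f_2, g_1 ≤ g_2 satisfy g_2 ≤ g_1 + e_1 and the interleaving e_2 = g_1 ≤ f_1 ≤ e_3 ≤ e_4 ≤ g_2 ≤ f_2 = e_5 with f_2 ≤ f_1 + e_1. Then e_2 > 2e_1, and the partition {2,4} ⊔ {3,5} is admissible for e, i.e., e_2 + e_4 ≤ e_3 + e_5, e_2 ≤ e_4 ≤ e_2 + e_1, e_3 ≤ e_5 ≤ e_3 + e_1, and e_3 + e_5 + e_1 ≤ 2e_2 + 2e_4. -/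
/-- Case (iv) of Lemma 2.6 of the paper: for `e ∈ P₂ \ P₃` with the interleaving
`e₂ = g₁ ≤ f₁ ≤ e₃ ≤ e₄ ≤ g₂ ≤ f₂ = e₅`, one has `e₂ > 2e₁` and the partition
`{2,4} ⊔ {3,5}` is admissible for `e`. -/
theorem stmt2 (e1 e2 e3 e4 e5 f1 f2 g1 g2 : ℤ)
    (he1 : 1 ≤ e1) (h12 : e1 ≤ e2) (h23 : e2 ≤ e3) (h34 : e3 ≤ e4) (h45 : e4 ≤ e5)
    (hP2a : e5 ≤ e1 + e4) (hP2b : e5 ≤ e2 + e3) (hP2c : e3 ≤ e1 + e2)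
    (hP2d : e4 ≤ 2 * e2)
    (hnP3 : 2 * e1 < e2 ∨ e1 + e3 < e4)
    (hf12 : f1 ≤ f2) (hg12 : g1 ≤ g2)
    (hg : g2 ≤ g1 + e1) (hf : f2 ≤ f1 + e1)
    (h1 : e2 = g1) (h2 : g1 ≤ f1) (h3 : f1 ≤ e3) (h4 : e3 ≤ e4) (h5 : e4 ≤ g2)
    (h6 : g2 ≤ f2) (h7 : f2 = e5) :
    2 * e1 < e2 ∧
      (e2 + e4 ≤ e3 + e5 ∧ (e2 ≤ e4 ∧ e4 ≤ e2 + e1) ∧ (e3 ≤ e5 ∧ e5 ≤ e3 + e1) ∧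
        e3 + e5 + e1 ≤ 2 * e2 + 2 * e4) := by
  omega
end
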